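/- For t ≥ 2, every n-vertex linear r-uniform hypergraph H that is Berge-K_{2,t}-free and Berge-C₃-free satisfies e(H) ≤ n·(√(4(t−1)(n−1) + (r−t)²) + r − t)/(2r(r−1)). -/

import Mathlib

open Finset

variable {V : Type*} [Fintype V] [DecidableEq V]

/-- The degree of a vertex: the number of hyperedges containing it. -/
def hdeg (E : Finset (Finset V)) (v : V) : ℕ :=
  (E.filter (fun e => v ∈ e)).card

open Classical in
/-- The neighborhood of a vertex: vertices at distance exactly one. -/
noncomputable def nbrs (E : Finset (Finset V)) (v : V) : Finset V :=
  Finset.univ.filter (fun u => u ≠ v ∧ ∃ e ∈ E, v ∈ e ∧ u ∈ e)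

/-- `E` is the edge set of an `r`-uniform hypergraph. -/
def Uniform (E : Finset (Finset V)) (r : ℕ) : Prop := ∀ e ∈ E, e.card = r

/-- A hypergraph is linear if any two distinct edges share at most one vertex. -/
def LinearH (E : Finset (Finset V)) : Prop :=
  ∀ e₁ ∈ E, ∀ e₂ ∈ E, e₁ ≠ e₂ → (e₁ ∩ e₂).card ≤ 1

/-- `lam` is an eigenvalue of the adjacency tensor of the `r`-uniform hypergraph `E`:
there is a nonzero complex vector `x` with `A(H) x^{r-1} = lam x^{[r-1]}`. -/
def IsAdjEigenvalue (E : Finset (Finset V)) (r : ℕ) (lam : ℂ) : Prop :=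
  ∃ x : V → ℂ, x ≠ 0 ∧ ∀ v : V,
    ∑ e ∈ E.filter (fun e => v ∈ e), ∏ u ∈ e.erase v, x u = lam * (x v) ^ (r - 1)

/-- The spectral radius of the adjacency tensor: max modulus of eigenvalues. -/
noncomputable def specRad (E : Finset (Finset V)) (r : ℕ) : ℝ :=
  sSup {z : ℝ | ∃ lam : ℂ, IsAdjEigenvalue E r lam ∧ z = ‖lam‖}

/-- The adjacency matrix of the 2-shadow multigraph of `E`. -/
noncomputable def shadowMatrix (E : Finset (Finset V)) : Matrix V V ℝ :=
  fun u v => if u = v then 0 else ((E.filter (fun e => u ∈ e ∧ v ∈ e)).card : ℝ)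

/-- The spectral radius of a real matrix: max modulus of complex eigenvalues. -/
noncomputable def matSpecRad (A : Matrix V V ℝ) : ℝ :=
  sSup {z : ℝ | ∃ (lam : ℂ) (x : V → ℂ), x ≠ 0 ∧
    (A.map (Complex.ofReal)).mulVec x = lam • x ∧ z = ‖lam‖}

/-- The number of 1-walks starting at `u`: pairs `(e, v)` with `u ∈ e`, `v ∈ e`, `v ≠ u`. -/
def w1 (E : Finset (Finset V)) (u : V) : ℕ :=
  ((E ×ˢ (univ : Finset V)).filter
    (fun p => u ∈ p.1 ∧ p.2 ∈ p.1 ∧ p.2 ≠ u)).card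

/-- The number of 2-walks starting at `u`. -/
def w2 (E : Finset (Finset V)) (u : V) : ℕ :=
  (((E ×ˢ (univ : Finset V)) ×ˢ (E ×ˢ (univ : Finset V))).filter
    (fun p => u ∈ p.1.1 ∧ p.1.2 ∈ p.1.1 ∧ p.1.2 ≠ u ∧
      p.1.2 ∈ p.2.1 ∧ p.2.2 ∈ p.2.1 ∧ p.2.2 ≠ p.1.2)).card

/-- `E` contains a Berge triangle. -/
def HasBergeC3 (E : Finset (Finset V)) : Prop :=
  ∃ e₁ ∈ E, ∃ e₂ ∈ E, ∃ e₃ ∈ E, ∃ v₁ v₂ v₃ : V,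
    e₁ ≠ e₂ ∧ e₂ ≠ e₃ ∧ e₁ ≠ e₃ ∧ v₁ ≠ v₂ ∧ v₂ ≠ v₃ ∧ v₁ ≠ v₃ ∧
    v₁ ∈ e₁ ∧ v₂ ∈ e₁ ∧ v₂ ∈ e₂ ∧ v₃ ∈ e₂ ∧ v₃ ∈ e₃ ∧ v₁ ∈ e₃

/-- `E` contains a Berge-`K_{s,t}`: disjoint vertex sets `S`, `T` of sizes `s`, `t`
and an injective assignment of distinct hyperedges to the pairs. -/
def HasBergeKst (E : Finset (Finset V)) (s t : ℕ) : Prop :=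
  ∃ (S T : Finset V) (f : V → V → Finset V),
    S.card = s ∧ T.card = t ∧ Disjoint S T ∧
    (∀ a ∈ S, ∀ b ∈ T, f a b ∈ E ∧ a ∈ f a b ∧ b ∈ f a b) ∧
    (∀ a ∈ S, ∀ b ∈ T, ∀ a' ∈ S, ∀ b' ∈ T, f a b = f a' b' → a = a' ∧ b = b')

/-- `E` contains a Berge-`K_{s,t}` with the `s`-side inside `V₁` and the `t`-side
inside `V₂`. -/
def HasBergeKstIn (E : Finset (Finset V)) (s t : ℕ) (V₁ V₂ : Finset V) : Prop :=
  ∃ (S T : Finset V) (f : V → V → Finset V),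
    S ⊆ V₁ ∧ T ⊆ V₂ ∧ S.card = s ∧ T.card = t ∧ Disjoint S T ∧
    (∀ a ∈ S, ∀ b ∈ T, f a b ∈ E ∧ a ∈ f a b ∧ b ∈ f a b) ∧
    (∀ a ∈ S, ∀ b ∈ T, ∀ a' ∈ S, ∀ b' ∈ T, f a b = f a' b' → a = a' ∧ b = b')

/-- `E` is hm-bipartite with head part `V₁` and mass part `V₂`: each edge meets
`V₁` in exactly one vertex and `V₂` in the other `r−1` vertices. -/
def HmBipartite (E : Finset (Finset V)) (r : ℕ) (V₁ V₂ : Finset V) : Prop :=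
  Disjoint V₁ V₂ ∧ V₁ ∪ V₂ = Finset.univ ∧
  ∀ e ∈ E, (e ∩ V₁).card = 1 ∧ (e ∩ V₂).card = r - 1

/-- The generalized binomial coefficient `C(x, k) = x(x−1)⋯(x−k+1)/k!` for real `x`. -/
noncomputable def genBinom (x : ℝ) (k : ℕ) : ℝ :=
  (descPochhammer ℝ k).eval x / (Nat.factorial k)

/-! Count the Berge paths `u ∈ e ∋ v ∈ e' ∋ w` with `e ≠ e'` starting at each vertex `u`.
By linearity there are `(r-1)^2 Σ_v d(v)(d(v)-1)` of them in total. Since there is no Berge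
triangle, the endpoint `w` is not adjacent to `u`, and a path to such a `w` is determined by its
middle vertex, a common neighbour of `u` and `w`; fewer than `t` of these exist, since `t` of them
would span a Berge `K_{2,t}` with `u` and `w`. So at most `(t-1)(n-1-(r-1)d(u))` paths start at
`u`. Summing over `u`, and using `Σ d = r e(H)` and Cauchy–Schwarz `(Σ d)^2 ≤ n Σ d^2`, gives a
quadratic inequality in `e(H)` whose larger root is the bound. -/

section Linear

variable {α : Type*} [DecidableEq α] {E : Finset (Finset α)} {r : ℕ}

theorem LinearH.eq_of_mem_of_mem (hL : LinearH E) {e₁ e₂ : Finset α} (h₁ : e₁ ∈ E) (h₂ : e₂ ∈ E)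
    {u v : α} (huv : u ≠ v) (hu₁ : u ∈ e₁) (hv₁ : v ∈ e₁) (hu₂ : u ∈ e₂) (hv₂ : v ∈ e₂) :
    e₁ = e₂ := by
  by_contra hne
  have hsub : ({u, v} : Finset α) ⊆ e₁ ∩ e₂ := by simp [insert_subset_iff, *]
  have := (card_le_card hsub).trans (hL e₁ h₁ e₂ h₂ hne)
  rw [card_pair huv] at this
  omega

theorem eq_of_adj_of_notMem (hL : LinearH E) (hC3 : ¬ HasBergeC3 E) {g : Finset α}
    (hg : g ∈ E) {b b' c : α} (hb : b ∈ g) (hb' : b' ∈ g) (hc : c ∉ g)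
    (hcb : ∃ h ∈ E, c ∈ h ∧ b ∈ h) (hcb' : ∃ h ∈ E, c ∈ h ∧ b' ∈ h) : b = b' := by
  by_contra hbb'
  obtain ⟨h, hE, hch, hbh⟩ := hcb
  obtain ⟨h', hE', hch', hbh'⟩ := hcb'
  have hgh : g ≠ h := by rintro rfl; exact hc hch
  have hgh' : g ≠ h' := by rintro rfl; exact hc hch'
  have hhh' : h' ≠ h := by
    rintro rfl
    exact hgh (hL.eq_of_mem_of_mem hg hE hbb' hb hb' hbh hbh')
  have hbc : b ≠ c := by rintro rfl; exact hc hb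
  have hb'c : b' ≠ c := by rintro rfl; exact hc hb'
  exact hC3 ⟨g, hg, h', hE', h, hE, b, b', c, hgh', hhh', hgh, hbb', hb'c, hbc,
    hb, hb', hbh', hch', hch, hbh⟩

def twoPathsFrom (E : Finset (Finset α)) (u : α) : Finset (Finset α × α × Finset α × α) :=
  {e ∈ E | u ∈ e}.biUnion fun e => (e.erase u).biUnion fun v =>
    {e' ∈ E.erase e | v ∈ e'}.biUnion fun e' => (e'.erase v).image fun w => (e, v, e', w)

theorem mem_twoPathsFrom {u v w : α} {e e' : Finset α} :
    (e, v, e', w) ∈ twoPathsFrom E u ↔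
      e ∈ E ∧ u ∈ e ∧ v ∈ e ∧ v ≠ u ∧
        e' ∈ E ∧ e' ≠ e ∧ v ∈ e' ∧ w ∈ e' ∧ w ≠ v := by
  simp only [twoPathsFrom, mem_biUnion, mem_filter, mem_erase, mem_image, Prod.mk.injEq]
  grind

theorem card_twoPathsFrom (hU : Uniform E r) (u : α) :
    #(twoPathsFrom E u) =
      ∑ e ∈ E with u ∈ e, ∑ v ∈ e.erase u, (hdeg E v - 1) * (r - 1) := by
  rw [twoPathsFrom,
    card_biUnion (by intro x hx y hy hxy; simp only [disjoint_left]; grind)]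
  refine sum_congr rfl fun e he => ?_
  rw [card_biUnion (by intro x hx y hy hxy; simp only [disjoint_left]; grind)]
  refine sum_congr rfl fun v hv => ?_
  rw [card_biUnion (by intro x hx y hy hxy; simp only [disjoint_left]; grind),
    sum_congr rfl fun e' he' => ?_, sum_const, smul_eq_mul, filter_erase, card_erase_of_mem, hdeg]
  · exact mem_filter.2 ⟨(mem_filter.1 he).1, (mem_erase.1 hv).2⟩
  · simp only [mem_filter, mem_erase] at he'
    rw [card_image_of_injective _ fun w w' h => by simpa using h, card_erase_of_mem he'.2,
      hU e' he'.1.2]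

theorem not_adj_of_mem_twoPathsFrom (hL : LinearH E) (hC3 : ¬ HasBergeC3 E) {u v w : α}
    {e e' : Finset α} (hp : (e, v, e', w) ∈ twoPathsFrom E u) :
    w ≠ u ∧ ∀ g ∈ E, u ∈ g → w ∉ g := by
  obtain ⟨he, hue, hve, hvu, he', he'e, hve', hwe', hwv⟩ := mem_twoPathsFrom.1 hp
  have hue' : u ∉ e' := fun hue' => he'e (hL.eq_of_mem_of_mem he' he hvu.symm hue' hve' hue hve)
  refine ⟨by rintro rfl; exact hue' hwe', fun g hg hug hwg => hwv ?_⟩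
  exact (eq_of_adj_of_notMem hL hC3 he' hve' hwe' hue' ⟨e, he, hue, hve⟩
    ⟨g, hg, hug, hwg⟩).symm

theorem sum_sum_erase {β : Type*} [AddCommMonoid β] (s : Finset α) (c : α → β) :
    ∑ u ∈ s, ∑ v ∈ s.erase u, c v = (#s - 1) • ∑ v ∈ s, c v := by
  rw [sum_comm' (t' := s) (s' := s.erase) fun u v => by simp only [mem_erase]; grind, smul_sum]
  exact sum_congr rfl fun v hv => by rw [sum_const, card_erase_of_mem hv]

end Linear

section Finite

variable {α : Type*} [Fintype α] [DecidableEq α] {E : Finset (Finset α)} {r t : ℕ}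

theorem mem_nbrs {u v : α} : v ∈ nbrs E u ↔ v ≠ u ∧ ∃ e ∈ E, u ∈ e ∧ v ∈ e := by
  simp [nbrs]

theorem mem_compl_insert_nbrs {u w : α} :
    w ∈ univ \ insert u (nbrs E u) ↔ w ≠ u ∧ ∀ g ∈ E, u ∈ g → w ∉ g := by
  simp only [mem_sdiff, mem_univ, mem_insert, mem_nbrs, true_and, not_or, not_and, not_exists]
  exact and_congr_right fun hwu => ⟨fun h => h hwu, fun h _ => h⟩

theorem card_nbrs (hU : Uniform E r) (hL : LinearH E) (u : α) :
    #(nbrs E u) = (r - 1) * hdeg E u := by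
  have hbiUnion : nbrs E u = {e ∈ E | u ∈ e}.biUnion (·.erase u) := by
    ext v
    simp only [mem_nbrs, mem_biUnion, mem_filter, mem_erase]
    grind
  have hdisj : (({e ∈ E | u ∈ e} : Finset (Finset α)) : Set (Finset α)).PairwiseDisjoint
      (·.erase u) := by
    intro e₁ h₁ e₂ h₂ hne
    rw [mem_coe, mem_filter] at h₁ h₂
    refine disjoint_left.2 fun v hv₁ hv₂ => hne ?_
    rw [mem_erase] at hv₁ hv₂
    exact hL.eq_of_mem_of_mem h₁.1 h₂.1 hv₁.1.symm h₁.2 hv₁.2 h₂.2 hv₂.2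
  rw [hbiUnion, card_biUnion hdisj, sum_congr rfl fun e he => ?_, sum_const, smul_eq_mul,
    mul_comm, hdeg]
  rw [mem_filter] at he
  rw [card_erase_of_mem he.2, hU e he.1]

theorem hasBergeKst_two_of_subset_inter_nbrs (hL : LinearH E) (hC3 : ¬ HasBergeC3 E)
    {u w : α} (huw : u ≠ w) (hw : ∀ g ∈ E, u ∈ g → w ∉ g) {T : Finset α}
    (hT : T ⊆ nbrs E u ∩ nbrs E w) : HasBergeKst E 2 #T := by
  have hTnbrs : ∀ b ∈ T,
      (b ≠ u ∧ ∃ e ∈ E, u ∈ e ∧ b ∈ e) ∧ (b ≠ w ∧ ∃ e ∈ E, w ∈ e ∧ b ∈ e) :=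
    fun b hb => by simpa only [mem_inter, mem_nbrs] using hT hb
  have hsep : ∀ a ∈ ({u, w} : Finset α), ∀ c ∈ ({u, w} : Finset α), a ≠ c →
      ∀ g ∈ E, a ∈ g → c ∉ g := by
    simp only [mem_insert, mem_singleton]
    rintro a (rfl | rfl) c (rfl | rfl) hac g hg hag hcg <;>
      first | exact hac rfl | exact hw g hg hag hcg | exact hw g hg hcg hag
  have hadj : ∀ a ∈ ({u, w} : Finset α), ∀ b ∈ T, ∃ e ∈ E, a ∈ e ∧ b ∈ e := by
    simp only [mem_insert, mem_singleton]
    rintro a (rfl | rfl) b hb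
    exacts [(hTnbrs b hb).1.2, (hTnbrs b hb).2.2]
  choose! f hfE hfa hfb using hadj
  refine ⟨{u, w}, T, f, card_pair huw, rfl, ?_, fun a ha b hb => ⟨hfE a ha b hb, hfa a ha b hb,
    hfb a ha b hb⟩, ?_⟩
  · refine disjoint_left.2 fun x hx hxT => ?_
    rcases mem_insert.1 hx with rfl | hx
    exacts [(hTnbrs x hxT).1.1 rfl, (hTnbrs x hxT).2.1 (mem_singleton.1 hx)]
  · intro a ha b hb a' ha' b' hb' heq
    have haa' : a = a' := by
      by_contra hne
      exact hsep a ha a' ha' hne _ (hfE a ha b hb) (hfa a ha b hb) (heq ▸ hfa a' ha' b' hb')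
    subst haa'
    -- the other vertex `c` of the 2-side sees `b` and `b'` from outside the edge `f a b`
    obtain ⟨c, hc, hca⟩ : ∃ c ∈ ({u, w} : Finset α), c ≠ a := by
      rcases mem_insert.1 ha with rfl | ha
      · exact ⟨w, by simp, huw.symm⟩
      · exact ⟨u, by simp, by rw [mem_singleton.1 ha]; exact huw⟩
    refine ⟨rfl, eq_of_adj_of_notMem hL hC3 (hfE a ha b hb) (hfb a ha b hb)
      (heq ▸ hfb a ha b' hb') (hsep a ha c hc hca.symm _ (hfE a ha b hb) (hfa a ha b hb))
      ⟨f c b, hfE c hc b hb, hfa c hc b hb, hfb c hc b hb⟩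
      ⟨f c b', hfE c hc b' hb', hfa c hc b' hb', hfb c hc b' hb'⟩⟩

theorem card_inter_nbrs_lt (hL : LinearH E) (hK : ¬ HasBergeKst E 2 t) (hC3 : ¬ HasBergeC3 E)
    {u w : α} (huw : u ≠ w) (hw : ∀ g ∈ E, u ∈ g → w ∉ g) :
    #(nbrs E u ∩ nbrs E w) < t := by
  by_contra! h
  obtain ⟨T, hT, rfl⟩ := exists_subset_card_eq h
  exact hK (hasBergeKst_two_of_subset_inter_nbrs hL hC3 huw hw hT)

theorem card_twoPathsFrom_le (hL : LinearH E) (hK : ¬ HasBergeKst E 2 t) (hC3 : ¬ HasBergeC3 E)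
    (u : α) : #(twoPathsFrom E u) ≤ (t - 1) * #(univ \ insert u (nbrs E u)) := by
  refine card_le_mul_card_image_of_maps_to (f := fun p => p.2.2.2) ?_ _ fun w hw => ?_
  · rintro ⟨e, v, e', w⟩ hp
    exact mem_compl_insert_nbrs.2 (not_adj_of_mem_twoPathsFrom hL hC3 hp)
  -- a path ending at a non-neighbour `w` of `u` is determined by its middle vertex
  obtain ⟨hwu, hw⟩ := mem_compl_insert_nbrs.1 hw
  refine le_trans ?_ (Nat.le_pred_of_lt (card_inter_nbrs_lt hL hK hC3 hwu.symm hw))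
  refine card_le_card_of_injOn (fun p => p.2.1) ?_ ?_
  · rintro ⟨e, v, e', w'⟩ hp
    simp only [mem_coe, mem_filter, mem_twoPathsFrom] at hp
    obtain ⟨⟨he, hue, hve, hvu, he', -, hve', hwe', hwv⟩, rfl⟩ := hp
    simp only [coe_inter, Set.mem_inter_iff, mem_coe, mem_nbrs]
    exact ⟨⟨hvu, e, he, hue, hve⟩, ⟨hwv.symm, e', he', hwe', hve'⟩⟩
  · rintro ⟨e₁, v, e₁', w₁⟩ hp ⟨e₂, v₂, e₂', w₂⟩ hq (rfl : v = v₂)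
    simp only [mem_coe, mem_filter, mem_twoPathsFrom] at hp hq
    obtain ⟨⟨he₁, hue₁, hve₁, hvu, he₁', -, hve₁', hwe₁', hwv⟩, rfl⟩ := hp
    obtain ⟨⟨he₂, hue₂, hve₂, -, he₂', -, hve₂', hwe₂', -⟩, rfl⟩ := hq
    rw [hL.eq_of_mem_of_mem he₁ he₂ hvu.symm hue₁ hve₁ hue₂ hve₂,
      hL.eq_of_mem_of_mem he₁' he₂' hwv.symm hve₁' hwe₁' hve₂' hwe₂']

theorem sum_sum_filter_mem_comm {β : Type*} [AddCommMonoid β] (f : α → Finset α → β) :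
    ∑ u, ∑ e ∈ E with u ∈ e, f u e = ∑ e ∈ E, ∑ u ∈ e, f u e :=
  sum_comm' fun u e => by simp only [mem_filter, mem_univ, true_and]; tauto

theorem sum_hdeg (hU : Uniform E r) : ∑ v, hdeg E v = r * #E :=
  calc ∑ v, hdeg E v = ∑ v, ∑ e ∈ E with v ∈ e, 1 := by simp [hdeg]
    _ = ∑ e ∈ E, ∑ v ∈ e, 1 := sum_sum_filter_mem_comm _
    _ = r * #E := by
      rw [sum_congr rfl fun e he => by rw [← card_eq_sum_ones, hU e he], sum_const, smul_eq_mul,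
        mul_comm]

theorem sum_card_twoPathsFrom (hU : Uniform E r) :
    ∑ u, #(twoPathsFrom E u) = (r - 1) ^ 2 * ∑ v, hdeg E v * (hdeg E v - 1) :=
  calc ∑ u, #(twoPathsFrom E u)
      = ∑ u, ∑ e ∈ E with u ∈ e, ∑ v ∈ e.erase u, (hdeg E v - 1) * (r - 1) :=
        sum_congr rfl fun u _ => card_twoPathsFrom hU u
    _ = ∑ e ∈ E, ∑ u ∈ e, ∑ v ∈ e.erase u, (hdeg E v - 1) * (r - 1) :=
        sum_sum_filter_mem_comm _
    _ = (r - 1) * ∑ v, ∑ e ∈ E with v ∈ e, (hdeg E v - 1) * (r - 1) := by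
        rw [sum_sum_filter_mem_comm, mul_sum]
        exact sum_congr rfl fun e he => by rw [sum_sum_erase, hU e he, smul_eq_mul]
    _ = (r - 1) ^ 2 * ∑ v, hdeg E v * (hdeg E v - 1) := by
        simp only [sum_const, smul_eq_mul, mul_sum, hdeg]
        exact sum_congr rfl fun v _ => by ring

theorem card_compl_insert_nbrs (hU : Uniform E r) (hL : LinearH E) (hr : 1 ≤ r) (u : α) :
    (#(univ \ insert u (nbrs E u)) : ℝ) = Fintype.card α - 1 - ((r : ℝ) - 1) * hdeg E u := by
  rw [card_sdiff_of_subset (subset_univ _), card_univ, Nat.cast_sub (card_le_univ _),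
    card_insert_of_notMem (by simp [mem_nbrs]), card_nbrs hU hL]
  push_cast [hr]
  ring

theorem sum_sq_hdeg_le (hU : Uniform E r) (hL : LinearH E) (hK : ¬ HasBergeKst E 2 t)
    (hC3 : ¬ HasBergeC3 E) (hr : 1 ≤ r) (ht : 1 ≤ t) :
    ((r : ℝ) - 1) ^ 2 * (∑ v, (hdeg E v : ℝ) ^ 2 - ∑ v, (hdeg E v : ℝ)) ≤
      ((t : ℝ) - 1) * (Fintype.card α * (Fintype.card α - 1) -
        ((r : ℝ) - 1) * ∑ v, (hdeg E v : ℝ)) :=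
  calc ((r : ℝ) - 1) ^ 2 * (∑ v, (hdeg E v : ℝ) ^ 2 - ∑ v, (hdeg E v : ℝ))
      = ((∑ u, #(twoPathsFrom E u) : ℕ) : ℝ) := by
        rw [sum_card_twoPathsFrom hU, ← sum_sub_distrib]
        push_cast [hr]
        congr 1
        refine sum_congr rfl fun v _ => ?_
        rcases Nat.eq_zero_or_pos (hdeg E v) with h | h
        · simp [h]
        · push_cast [h]; ring
    _ ≤ ∑ u, ((t : ℝ) - 1) * (Fintype.card α - 1 - ((r : ℝ) - 1) * hdeg E u) := by
        rw [Nat.cast_sum]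
        refine sum_le_sum fun u _ => ?_
        rw [← card_compl_insert_nbrs hU hL hr u]
        exact_mod_cast card_twoPathsFrom_le hL hK hC3 u
    _ = _ := by
        rw [← mul_sum, sum_sub_distrib, ← mul_sum, sum_const, card_univ, nsmul_eq_mul]

end Finite

theorem two_mul_le_add_sqrt_of_sq_le {x b c : ℝ} (h : x ^ 2 ≤ b * x + c) :
    2 * x ≤ b + √(b ^ 2 + 4 * c) := by
  have := Real.le_sqrt_of_sq_le (show (2 * x - b) ^ 2 ≤ b ^ 2 + 4 * c by nlinarith)
  linarith

theorem le_of_degree_sum_bounds {R T N M A B : ℝ} (hR : 1 < R) (hN : 0 ≤ N)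
    (hA : A = R * M) (hCS : A ^ 2 ≤ N * B)
    (hpaths : (R - 1) ^ 2 * (B - A) ≤ (T - 1) * (N * (N - 1) - (R - 1) * A)) :
    M ≤ N * ((√(4 * (T - 1) * (N - 1) + (R - T) ^ 2) + R - T) / (2 * R * (R - 1))) := by
  subst hA
  have hquad : (R * (R - 1) * M) ^ 2 ≤
      (R - T) * N * (R * (R - 1) * M) + (T - 1) * (N - 1) * N ^ 2 := by
    nlinarith [mul_le_mul_of_nonneg_left hpaths hN,
      mul_le_mul_of_nonneg_left hCS (sq_nonneg (R - 1))]
  have hsqrt := two_mul_le_add_sqrt_of_sq_le hquad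
  rw [show ((R - T) * N) ^ 2 + 4 * ((T - 1) * (N - 1) * N ^ 2) =
      N ^ 2 * (4 * (T - 1) * (N - 1) + (R - T) ^ 2) by ring, Real.sqrt_mul (sq_nonneg N),
    Real.sqrt_sq hN] at hsqrt
  rw [mul_div_assoc', le_div_iff₀ (by nlinarith)]
  nlinarith

/-- edge bound for Berge-K_{2,t}-free, Berge-C₃-free linear
hypergraphs. -/
theorem stmt16 {V : Type*} [Fintype V] [DecidableEq V]
    (E : Finset (Finset V)) (r t n : ℕ) (hr : 2 ≤ r) (ht : 2 ≤ t)
    (hn : Fintype.card V = n) (hU : Uniform E r) (hL : LinearH E)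
    (hK : ¬ HasBergeKst E 2 t) (hC3 : ¬ HasBergeC3 E) :
    (E.card : ℝ) ≤ (n:ℝ) *
      ((Real.sqrt (4 * ((t:ℝ) - 1) * ((n:ℝ) - 1) + ((r:ℝ) - (t:ℝ)) ^ 2) + (r:ℝ) - (t:ℝ)) /
        (2 * (r:ℝ) * ((r:ℝ) - 1))) := by
  subst hn
  refine le_of_degree_sum_bounds (by exact_mod_cast hr) (Nat.cast_nonneg _) ?_ ?_
    (sum_sq_hdeg_le hU hL hK hC3 (by omega) (by omega))
  · exact_mod_cast sum_hdeg hU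
  · simpa using sq_sum_le_card_mul_sum_sq (s := univ) (f := fun v => (hdeg E v : ℝ))
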